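/- Let L be a profinite (compact, Hausdorff, totally disconnected) space and N a discrete abelian group. Then the canonical map C(L, ℤ) ⊗_ℤ N → C(L, N) sending f ⊗ n to the function x ↦ f(x)·n is an isomorphism of abelian groups. -/

import Mathlib

open TensorProduct

variable {L N : Type*} [TopologicalSpace L] [AddCommGroup N] [TopologicalSpace N]
  [DiscreteTopology N]

instance : ContinuousConstSMul ℤ N := ⟨fun _ => continuous_of_discreteTopology⟩

/-- The bilinear map `C(L,ℤ) × N → C(L,N)` sending `(f, n)` to `x ↦ f x • n`. -/
noncomputable def smulBilin : C(L, ℤ) →ₗ[ℤ] N →ₗ[ℤ] C(L, N) :=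
  LinearMap.mk₂ ℤ
    (fun f n => ContinuousMap.mk (fun x => f x • n)
      (Continuous.comp (continuous_of_discreteTopology (f := fun m : ℤ => m • n))
        f.continuous))
    (by intro f f' n; ext x; simp [add_smul])
    (by intro c f n; ext x; simp [mul_smul])
    (by intro f n n'; ext x; simp)
    (by intro c f n; ext x; exact smul_comm _ _ _)

/-!
On a compact space a locally constant map `g : L → V` has finitely many fibres, all clopen.
Writing `χ_v` for the indicator of `g = v`, the tensor `∑ᵥ χ_v ⊗ c v` is sent to `c ∘ g`, and it
vanishes as soon as `c ∘ g` does. Every tensor `∑ᵢ fᵢ ⊗ nᵢ` has this shape, with `g` the tuple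
`x ↦ (fᵢ x)ᵢ` and `c v = ∑ᵢ vᵢ • nᵢ`, because each `fᵢ` is constant on the fibres of `g`; this
gives injectivity. A continuous `f : L → N` is itself locally constant, so `g = f`, `c = id` gives
a preimage of `f`.
-/

namespace IsLocallyConstant

variable {V : Type*} {g : L → V}

noncomputable def fiberIndicator (hg : IsLocallyConstant g) (v : V) : C(L, ℤ) :=
  LocallyConstant.charFn ℤ (hg.isClopen_fiber v)

theorem fiberIndicator_apply_self (hg : IsLocallyConstant g) (x : L) :
    hg.fiberIndicator (g x) x = 1 :=
  (LocallyConstant.charFn_eq_one ℤ x (hg.isClopen_fiber _)).2 rfl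

theorem fiberIndicator_apply_of_ne (hg : IsLocallyConstant g) {x : L} {v : V} (h : g x ≠ v) :
    hg.fiberIndicator v x = 0 :=
  (LocallyConstant.charFn_eq_zero ℤ x (hg.isClopen_fiber _)).2 h

variable [CompactSpace L] {M : Type*} [AddCommGroup M]

theorem sum_fiberIndicator_smul (hg : IsLocallyConstant g) (c : V → M) (x : L) :
    ∑ v ∈ hg.range_finite.toFinset, hg.fiberIndicator v x • c v = c (g x) := by
  rw [Finset.sum_eq_single_of_mem (g x) (by simp), hg.fiberIndicator_apply_self, one_smul]
  intro v _ hv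
  rw [hg.fiberIndicator_apply_of_ne (Ne.symm hv), zero_smul]

noncomputable def fiberTensor (hg : IsLocallyConstant g) (c : V → M) : C(L, ℤ) ⊗[ℤ] M :=
  ∑ v ∈ hg.range_finite.toFinset, hg.fiberIndicator v ⊗ₜ c v

theorem lift_smulBilin_fiberTensor (hg : IsLocallyConstant g) (c : V → N) (x : L) :
    lift smulBilin (hg.fiberTensor c) x = c (g x) := by
  simp [fiberTensor, smulBilin, ContinuousMap.coe_sum, hg.sum_fiberIndicator_smul]

theorem fiberTensor_eq_zero (hg : IsLocallyConstant g) {c : V → M} (hc : ∀ x, c (g x) = 0) :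
    hg.fiberTensor c = 0 := by
  refine Finset.sum_eq_zero fun v hv => ?_
  obtain ⟨x, rfl⟩ : v ∈ Set.range g := by simpa using hv
  rw [hc, tmul_zero]

end IsLocallyConstant

open IsLocallyConstant

theorem isLocallyConstant_tuple {ι : Type*} [Finite ι] (f : ι → C(L, ℤ)) :
    IsLocallyConstant fun x i => f i x :=
  (IsLocallyConstant.iff_continuous _).2 (continuous_pi fun i => (f i).continuous)

theorem sum_tmul_eq_fiberTensor [CompactSpace L] {M ι : Type*} [AddCommGroup M] [Fintype ι]
    (f : ι → C(L, ℤ)) (n : ι → M) :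
    ∑ i, f i ⊗ₜ n i =
      (isLocallyConstant_tuple f).fiberTensor fun v => ∑ i, v i • n i := by
  set hg := isLocallyConstant_tuple f
  have hf : ∀ i, ∑ v ∈ hg.range_finite.toFinset, v i • hg.fiberIndicator v = f i := fun i => by
    ext x
    simpa [ContinuousMap.coe_sum, mul_comm] using hg.sum_fiberIndicator_smul (· i) x
  calc ∑ i, f i ⊗ₜ n i
      = ∑ i, ∑ v ∈ hg.range_finite.toFinset, hg.fiberIndicator v ⊗ₜ (v i • n i) := by
        refine Finset.sum_congr rfl fun i _ => ?_
        rw [← hf i, sum_tmul]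
        simp_rw [smul_tmul]
    _ = _ := by
        rw [fiberTensor, Finset.sum_comm]
        simp_rw [← tmul_sum]

theorem stmt_7_general [CompactSpace L] :
    Function.Bijective (TensorProduct.lift (smulBilin (L := L) (N := N))) := by
  refine ⟨(injective_iff_map_eq_zero _).2 fun t ht => ?_, fun f => ?_⟩
  · obtain ⟨S, rfl⟩ := exists_finset t
    rw [← Finset.sum_coe_sort, sum_tmul_eq_fiberTensor] at ht ⊢
    exact fiberTensor_eq_zero _ fun x => by
      simpa [lift_smulBilin_fiberTensor] using DFunLike.congr_fun ht x
  · have hf := (IsLocallyConstant.iff_continuous f).2 f.continuous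
    exact ⟨hf.fiberTensor id, ContinuousMap.ext (hf.lift_smulBilin_fiberTensor id)⟩

/-- for a profinite space L and a discrete abelian group N, the canonical
map `C(L,ℤ) ⊗ N → C(L,N)`, `f ⊗ n ↦ (x ↦ f x • n)`, is an isomorphism. -/
theorem stmt_7 [CompactSpace L] [T2Space L] [TotallyDisconnectedSpace L] :
    Function.Bijective (TensorProduct.lift (smulBilin (L := L) (N := N))) :=
  stmt_7_general
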